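/- Let φ be a solution of the normalized equation EQ_λ on (0,∞) with φ(t) > 0 for all t > 0 and liminf_{t→∞} φ(t) = 0. Then lim_{t→∞} E(t) = 0, φ has no local minimum point in (0,∞), and φ is eventually monotone decreasing with lim_{t→∞} φ(t) = 0. -/

import Mathlib

/-!
The energy `E = φ'²/2 + V(φ)`, with `V x = λ (|x|^(q+1)/(q+1) - x²/2)`, satisfies
`E' = -(n-1) coth t · φ'² ≤ 0`. As `V → ∞`, `φ` stays bounded, so its liminf `0` is a cluster
value of `φ`; since `V 0 = 0` and `E` decreases, `E ≥ 0`. At a critical point `E ≥ 0` forces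
`φ > 1` (`V < 0` on `(0, 1]`), where the equation gives `φ'' < 0`: every critical point is a
strict local maximum. So `φ` has no local minimum, and at most one critical point, because two
strict local maxima enclose a local minimum. Hence `φ'` has eventually a constant sign, negative
because `φ` keeps returning near `0`, and `φ` decreases to `0`. Finally `φ'` cannot stay away
from `0` while `φ` is bounded below, so the monotone energy tends to `0`.
-/

open Real Set Filter Topology

noncomputable def yamabePotential (lam q x : ℝ) : ℝ :=
  lam * (|x| ^ (q + 1) / (q + 1) - x ^ 2 / 2)

section Potential

variable {lam q x : ℝ}

lemma continuous_yamabePotential (hq : -1 ≤ q) : Continuous (yamabePotential lam q) := by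
  unfold yamabePotential
  have := Real.continuous_rpow_const (q := q + 1) (by linarith)
  fun_prop

@[simp]
lemma yamabePotential_zero (lam q : ℝ) : yamabePotential lam q 0 = 0 := by
  rcases eq_or_ne (q + 1) 0 with hq | hq <;> simp [yamabePotential, hq]

lemma yamabePotential_neg (hlam : 0 < lam) (hq : 1 < q) (hx₀ : x ≠ 0) (hx₁ : |x| ≤ 1) :
    yamabePotential lam q x < 0 := by
  have hx : 0 < |x| := abs_pos.2 hx₀
  have hpow : |x| ^ (q + 1) ≤ x ^ 2 := by
    simpa [Real.rpow_two] using
      Real.rpow_le_rpow_of_exponent_ge hx hx₁ (by linarith : (2:ℝ) ≤ q + 1)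
  have : |x| ^ (q + 1) / (q + 1) < x ^ 2 / 2 := by
    calc |x| ^ (q + 1) / (q + 1) ≤ x ^ 2 / (q + 1) := by gcongr
      _ < x ^ 2 / 2 := div_lt_div_of_pos_left (by positivity) two_pos (by linarith)
  unfold yamabePotential
  nlinarith

lemma tendsto_yamabePotential_atTop (hlam : 0 < lam) (hq : 1 < q) :
    Tendsto (yamabePotential lam q) atTop atTop := by
  have hpow : Tendsto (fun x : ℝ => x ^ (q - 1) / (q + 1) - 1 / 2) atTop atTop :=
    tendsto_atTop_add_const_right _ _
      ((tendsto_rpow_atTop (by linarith)).atTop_div_const (by linarith))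
  refine (((tendsto_pow_atTop two_ne_zero).atTop_mul_atTop₀ hpow).const_mul_atTop hlam).congr' ?_
  filter_upwards [eventually_gt_atTop 0] with x hx
  have : x ^ (q + 1) = x ^ 2 * x ^ (q - 1) := by
    rw [← Real.rpow_two, ← Real.rpow_add hx]; ring_nf
  rw [yamabePotential, abs_of_pos hx, this]
  ring

lemma hasDerivAt_yamabePotential (hx : 0 < x) (hq : q + 1 ≠ 0) :
    HasDerivAt (yamabePotential lam q) (-(lam * (x - |x| ^ (q - 1) * x))) x := by
  have hpow : HasDerivAt (fun y => |y| ^ (q + 1)) ((q + 1) * x ^ q) x := by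
    have := Real.hasDerivAt_rpow_const (p := q + 1) (Or.inl hx.ne')
    rw [add_sub_cancel_right] at this
    refine this.congr_of_eventuallyEq ?_
    filter_upwards [eventually_gt_nhds hx] with y hy
    rw [abs_of_pos hy]
  have := (((hpow.div_const (q + 1)).sub ((hasDerivAt_pow 2 x).div_const 2)).const_mul lam)
  refine this.congr_deriv ?_
  rw [abs_of_pos hx, ← Real.rpow_add_one hx.ne', sub_add_cancel]
  field_simp
  ring

end Potential

section Calculus

variable {f f' : ℝ → ℝ}

-- A strict second-derivative test: Mathlib's `isLocalMax_of_deriv_deriv_neg` is not strict.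
lemma eventually_nhdsNE_lt_of_deriv_eq_zero {t c : ℝ}
    (hd : ∀ᶠ s in 𝓝 t, HasDerivAt f (f' s) s) (hd' : HasDerivAt f' c t)
    (h₀ : f' t = 0) (hc : c < 0) : ∀ᶠ s in 𝓝[≠] t, f s < f t := by
  have hsign : ∀ᶠ s in 𝓝[≠] t, f' s * (s - t) < 0 := by
    filter_upwards [hasDerivAt_iff_tendsto_slope.1 hd' |>.eventually (eventually_lt_nhds hc)]
      with s hs
    rw [slope_def_field, h₀, sub_zero] at hs
    exact mul_neg_iff.2 (div_neg_iff.1 hs)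
  obtain ⟨δ, hδ, hball⟩ := Metric.eventually_nhds_iff_ball.1
    (hd.and (eventually_nhdsWithin_iff.1 hsign))
  have hmvt : ∀ u v, u < v → u ∈ Metric.ball t δ → v ∈ Metric.ball t δ →
      ∃ ξ ∈ Ioo u v, f v - f u = f' ξ * (v - u) := by
    intro u v huv hu hv
    have hsub : Icc u v ⊆ Metric.ball t δ := (convex_ball t δ).ordConnected.out hu hv
    obtain ⟨ξ, hξ, heq⟩ := exists_hasDerivAt_eq_slope f f' huv
      (fun x hx => (hball x (hsub hx)).1.continuousAt.continuousWithinAt)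
      (fun x hx => (hball x (hsub (Ioo_subset_Icc_self hx))).1)
    exact ⟨ξ, hξ, by rw [heq]; field_simp [(sub_pos.2 huv).ne']⟩
  rw [eventually_nhdsWithin_iff]
  filter_upwards [Metric.ball_mem_nhds t hδ] with s hs hne
  have ht := Metric.mem_ball_self (x := t) hδ
  rcases lt_or_gt_of_ne hne with hlt | hgt
  · obtain ⟨ξ, hξ, heq⟩ := hmvt s t hlt hs ht
    have := (hball ξ ((convex_ball t δ).ordConnected.out hs ht (Ioo_subset_Icc_self hξ))).2
      hξ.2.ne
    nlinarith [hξ.1, hξ.2]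
  · obtain ⟨ξ, hξ, heq⟩ := hmvt t s hgt ht hs
    have := (hball ξ ((convex_ball t δ).ordConnected.out ht hs (Ioo_subset_Icc_self hξ))).2
      hξ.1.ne'
    nlinarith [hξ.1, hξ.2]

lemma not_isLocalMin_of_eventually_lt {t : ℝ} (h : ∀ᶠ s in 𝓝[≠] t, f s < f t) :
    ¬ IsLocalMin f t := fun hmin =>
  ((h.and (nhdsWithin_le_nhds hmin)).exists).elim fun _ hs => hs.1.not_ge hs.2

lemma exists_isLocalMin_of_eventually_lt {a b : ℝ} (hab : a < b) (hf : ContinuousOn f (Icc a b))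
    (ha : ∀ᶠ x in 𝓝[>] a, f x < f a) (hb : ∀ᶠ x in 𝓝[<] b, f x < f b) :
    ∃ c ∈ Ioo a b, IsLocalMin f c := by
  obtain ⟨x, hxa, hx⟩ := (ha.and (Ioo_mem_nhdsGT hab)).exists
  obtain ⟨y, hyb, hy⟩ := (hb.and (Ioo_mem_nhdsLT hab)).exists
  obtain ⟨z, hz, hza, hzb⟩ : ∃ z ∈ Ioo a b, f z < f a ∧ f z < f b := by
    rcases le_total (f x) (f y) with hxy | hxy
    · exact ⟨x, hx, hxa, hxy.trans_lt hyb⟩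
    · exact ⟨y, hy, hxy.trans_lt hxa, hyb⟩
  obtain ⟨c, hc, hmin⟩ := isCompact_Icc.exists_isMinOn_mem_subset (s := Ioo a b) hf
    (Ioo_subset_Icc_self hz) (by
      rw [Icc_sdiff_Ioo_same hab.le]
      rintro z' (rfl | rfl) <;> assumption)
  exact ⟨c, hc, hmin.isLocalMin (Icc_mem_nhds hc.1 hc.2)⟩

lemma exists_forall_ge_deriv_ne_zero {a : ℝ} (hd : ∀ t ∈ Ioi a, HasDerivAt f (f' t) t)
    (hmax : ∀ t ∈ Ioi a, f' t = 0 → ∀ᶠ s in 𝓝[≠] t, f s < f t) :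
    ∃ T ∈ Ioi a, ∀ t ≥ T, f' t ≠ 0 := by
  by_cases hcrit : ∃ t₁ ∈ Ioi a, f' t₁ = 0
  · obtain ⟨t₁, ht₁, h₁⟩ := hcrit
    refine ⟨t₁ + 1, by simp only [mem_Ioi] at ht₁ ⊢; linarith, fun t ht h₀ => ?_⟩
    have ht : t ∈ Ioi a := by simp only [mem_Ioi] at ht₁ ⊢; linarith
    obtain ⟨c, hc, hmin⟩ := exists_isLocalMin_of_eventually_lt (f := f) (by linarith)
      (fun x hx => (hd x (lt_of_lt_of_le ht₁ hx.1)).continuousAt.continuousWithinAt)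
      (nhdsGT_le_nhdsNE t₁ (hmax t₁ ht₁ h₁)) (nhdsLT_le_nhdsNE t (hmax t ht h₀))
    have hc₀ : c ∈ Ioi a := lt_trans ht₁ hc.1
    exact not_isLocalMin_of_eventually_lt
      (hmax c hc₀ (hmin.hasDerivAt_eq_zero (hd c hc₀))) hmin
  · push Not at hcrit
    exact ⟨a + 1, by simp, fun t ht => hcrit t (by simp only [mem_Ioi]; linarith)⟩

lemma deriv_neg_of_forall_exists_lt {T : ℝ} (hd : ∀ t ≥ T, HasDerivAt f (f' t) t)
    (hcont : ContinuousOn f' (Ici T)) (hne : ∀ t ≥ T, f' t ≠ 0)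
    (hlt : ∀ t ≥ T, ∃ s > t, f s < f t) {t : ℝ} (ht : T ≤ t) : f' t < 0 := by
  refine (hne t ht).lt_or_gt.resolve_right fun hpos => ?_
  obtain ⟨s, hts, hs⟩ := hlt t ht
  obtain ⟨ξ, hξ, hslope⟩ := exists_hasDerivAt_eq_slope f f' hts
    (fun x hx => (hd x (ht.trans hx.1)).continuousAt.continuousWithinAt)
    (fun x hx => hd x (ht.trans hx.1.le))
  have hξneg : f' ξ < 0 := by
    rw [hslope]; exact div_neg_of_neg_of_pos (by linarith) (by linarith)
  obtain ⟨u, hu, hu₀⟩ := isPreconnected_Ici.intermediate_value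
    (show ξ ∈ Ici T from ht.trans hξ.1.le) (show t ∈ Ici T from ht) hcont
    ⟨hξneg.le, hpos.le⟩
  exact hne u hu hu₀

lemma frequently_neg_lt_deriv {T b δ : ℝ} (hd : ∀ t ≥ T, HasDerivAt f (f' t) t)
    (hb : ∀ t ≥ T, b ≤ f t) (hδ : 0 < δ) : ∃ᶠ t in atTop, -δ < f' t := by
  rw [frequently_atTop]
  by_contra! hle
  obtain ⟨a, ha⟩ := hle
  set s := max a T
  set u := s + (f s - b) / δ + 1
  have hfs : 0 ≤ (f s - b) / δ := div_nonneg (by linarith [hb s (le_max_right a T)]) hδ.le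
  have hsu : s < u := by linarith
  obtain ⟨ξ, hξ, hslope⟩ := exists_hasDerivAt_eq_slope f f' hsu
    (fun x hx => (hd x ((le_max_right a T).trans hx.1)).continuousAt.continuousWithinAt)
    (fun x hx => hd x ((le_max_right a T).trans hx.1.le))
  have hξ' : (f u - f s) / (u - s) ≤ -δ := hslope ▸ ha ξ ((le_max_left a T).trans hξ.1.le)
  rw [div_le_iff₀ (by linarith)] at hξ'
  have : δ * ((f s - b) / δ) = f s - b := by field_simp
  nlinarith [hb u (by linarith [le_max_right a T])]

lemma tendsto_of_antitoneOn_of_frequently_lt {T a : ℝ} (hf : AntitoneOn f (Ici T))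
    (ha : ∀ t ≥ T, a ≤ f t) (hfreq : ∀ b > a, ∃ᶠ t in atTop, f t < b) :
    Tendsto f atTop (𝓝 a) := by
  refine tendsto_order.2 ⟨fun b hb => ?_, fun b hb => ?_⟩
  · filter_upwards [eventually_ge_atTop T] with t ht using hb.trans_le (ha t ht)
  · obtain ⟨s, hs, hsT⟩ := ((hfreq b hb).and_eventually (eventually_ge_atTop T)).exists
    filter_upwards [eventually_ge_atTop s] with t ht using
      (hf (mem_Ici.2 hsT) (mem_Ici.2 (hsT.trans ht)) ht).trans_lt hs

end Calculus

structure IsRadialYamabeSolution (n : ℕ) (lam q : ℝ) (φ φ' φ'' : ℝ → ℝ) : Prop where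
  hasDerivAt : ∀ t ∈ Ioi (0:ℝ), HasDerivAt φ (φ' t) t
  hasDerivAt_deriv : ∀ t ∈ Ioi (0:ℝ), HasDerivAt φ' (φ'' t) t
  ode : ∀ t ∈ Ioi (0:ℝ),
    φ'' t + ((n : ℝ) - 1) * ((exp (2*t) + 1) / (exp (2*t) - 1)) * φ' t
      = lam * (φ t - |φ t| ^ (q - 1) * φ t)

noncomputable def yamabeEnergy (lam q : ℝ) (φ φ' : ℝ → ℝ) (t : ℝ) : ℝ :=
  1 / 2 * φ' t ^ 2 + yamabePotential lam q (φ t)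

lemma yamabePotential_le_yamabeEnergy (lam q : ℝ) (φ φ' : ℝ → ℝ) (t : ℝ) :
    yamabePotential lam q (φ t) ≤ yamabeEnergy lam q φ φ' t := by
  unfold yamabeEnergy; nlinarith [sq_nonneg (φ' t)]

section Energy

variable {lam q : ℝ} {φ φ' : ℝ → ℝ}

lemma isBoundedUnder_le_of_antitoneOn_yamabeEnergy (hlam : 0 < lam) (hq : 1 < q)
    (hE : AntitoneOn (yamabeEnergy lam q φ φ') (Ioi 0)) :
    IsBoundedUnder (· ≤ ·) atTop φ := by
  obtain ⟨M, hM⟩ := eventually_atTop.1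
    ((tendsto_yamabePotential_atTop hlam hq).eventually_gt_atTop (yamabeEnergy lam q φ φ' 1))
  refine isBoundedUnder_of_eventually_le (a := M) ?_
  filter_upwards [eventually_ge_atTop 1] with t ht
  by_contra! hMt
  have hdecay := hE (mem_Ioi.2 one_pos) (mem_Ioi.2 (by linarith)) ht
  linarith [hM (φ t) hMt.le, yamabePotential_le_yamabeEnergy lam q φ φ' t]

lemma yamabeEnergy_nonneg (hq : -1 ≤ q) (hE : AntitoneOn (yamabeEnergy lam q φ φ') (Ioi 0))
    (hφ : MapClusterPt 0 atTop φ) {t : ℝ} (ht : t ∈ Ioi 0) :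
    0 ≤ yamabeEnergy lam q φ φ' t := by
  by_contra! hneg
  have hV : ∀ᶠ x in 𝓝 0, yamabeEnergy lam q φ φ' t < yamabePotential lam q x :=
    ((continuous_yamabePotential hq).tendsto 0).eventually_const_lt (by simpa using hneg)
  obtain ⟨s, hs, hts⟩ := ((hφ.frequently hV).and_eventually (eventually_ge_atTop t)).exists
  have hdecay := hE ht (mem_Ioi.2 (lt_of_lt_of_le ht hts)) hts
  linarith [yamabePotential_le_yamabeEnergy lam q φ φ' s]

lemma tendsto_yamabeEnergy_zero {T : ℝ} (hq : -1 ≤ q)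
    (hd : ∀ t ≥ T, HasDerivAt φ (φ' t) t) (hneg : ∀ t ≥ T, φ' t < 0)
    (hφpos : ∀ t ≥ T, 0 ≤ φ t) (hφ : Tendsto φ atTop (𝓝 0))
    (hE : AntitoneOn (yamabeEnergy lam q φ φ') (Ici T))
    (hE₀ : ∀ t ≥ T, 0 ≤ yamabeEnergy lam q φ φ' t) :
    Tendsto (yamabeEnergy lam q φ φ') atTop (𝓝 0) := by
  refine tendsto_of_antitoneOn_of_frequently_lt hE hE₀ fun ε hε => ?_
  have hpot : ∀ᶠ t in atTop, yamabePotential lam q (φ t) < ε / 2 :=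
    (((continuous_yamabePotential hq).tendsto 0).comp hφ).eventually_lt_const
      (by simpa using half_pos hε)
  refine ((frequently_neg_lt_deriv hd hφpos (sqrt_pos.2 hε)).and_eventually
    (hpot.and (eventually_ge_atTop T))).mono fun t ⟨hslow, hsmall, hT⟩ => ?_
  have hkin : φ' t ^ 2 < ε := by nlinarith [sq_sqrt hε.le, hneg t hT]
  unfold yamabeEnergy
  linarith

end Energy

namespace IsRadialYamabeSolution

variable {n : ℕ} {lam q : ℝ} {φ φ' φ'' : ℝ → ℝ}

lemma hasDerivAt_yamabeEnergy (h : IsRadialYamabeSolution n lam q φ φ' φ'') (hq : q + 1 ≠ 0)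
    {t : ℝ} (ht : t ∈ Ioi 0) (hpos : 0 < φ t) :
    HasDerivAt (yamabeEnergy lam q φ φ')
      (-(((n : ℝ) - 1) * ((exp (2*t) + 1) / (exp (2*t) - 1)) * φ' t ^ 2)) t := by
  have hkin := ((h.hasDerivAt_deriv t ht).pow 2).const_mul (1 / 2 : ℝ)
  have hpot := (hasDerivAt_yamabePotential (lam := lam) hpos hq).comp t (h.hasDerivAt t ht)
  refine (hkin.add hpot).congr_deriv ?_
  have := h.ode t ht
  linear_combination φ' t * this

lemma antitoneOn_yamabeEnergy (h : IsRadialYamabeSolution n lam q φ φ' φ'') (hn : 1 ≤ n)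
    (hq : q + 1 ≠ 0) (hpos : ∀ t ∈ Ioi 0, 0 < φ t) :
    AntitoneOn (yamabeEnergy lam q φ φ') (Ioi 0) := by
  have hd := fun t ht => h.hasDerivAt_yamabeEnergy hq ht (hpos t ht)
  refine antitoneOn_of_hasDerivWithinAt_nonpos (convex_Ioi 0)
    (fun t ht => (hd t ht).continuousAt.continuousWithinAt)
    (fun t ht => (hd t (interior_subset ht)).hasDerivWithinAt) fun t ht => ?_
  rw [interior_Ioi] at ht
  have hcoth : 0 ≤ (exp (2*t) + 1) / (exp (2*t) - 1) := by
    have : 1 < exp (2*t) := one_lt_exp_iff.2 (by simp only [mem_Ioi] at ht; linarith)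
    exact div_nonneg (by positivity) (by linarith)
  have hn' : (0:ℝ) ≤ (n:ℝ) - 1 := by
    have : (1:ℝ) ≤ n := by exact_mod_cast hn
    linarith
  have := mul_nonneg (mul_nonneg hn' hcoth) (sq_nonneg (φ' t))
  linarith

lemma eventually_lt_of_deriv_eq_zero (h : IsRadialYamabeSolution n lam q φ φ' φ'')
    (hlam : 0 < lam) (hq : 1 < q) {t : ℝ} (ht : t ∈ Ioi 0) (hpos : 0 < φ t)
    (hE : 0 ≤ yamabeEnergy lam q φ φ' t) (h₀ : φ' t = 0) :
    ∀ᶠ s in 𝓝[≠] t, φ s < φ t := by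
  have hφ : 1 < φ t := by
    by_contra! hle
    have := yamabePotential_neg hlam hq hpos.ne' (by rwa [abs_of_pos hpos])
    simp only [yamabeEnergy, h₀] at hE
    linarith
  have hφ'' : φ'' t < 0 := by
    have hode := h.ode t ht
    rw [h₀, mul_zero, add_zero] at hode
    have hpow : 1 < |φ t| ^ (q - 1) :=
      Real.one_lt_rpow (by rwa [abs_of_pos hpos]) (by linarith)
    rw [hode]
    nlinarith [mul_pos (mul_pos hlam hpos) (sub_pos.2 hpow)]
  exact eventually_nhdsNE_lt_of_deriv_eq_zero (eventually_of_mem (isOpen_Ioi.mem_nhds ht)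
    h.hasDerivAt) (h.hasDerivAt_deriv t ht) h₀ hφ''

end IsRadialYamabeSolution

/-- If a positive solution φ of the normalized equation EQ_λ has liminf 0 at infinity,
then its energy tends to 0 at infinity, φ has no local minimum point in (0,∞), and φ
is eventually monotone decreasing with limit 0 at infinity. -/
theorem positive_solution_with_liminf_zero
    (n : ℕ) (hn : 2 ≤ n) (lam q : ℝ) (hlam : 0 < lam) (hq : 1 < q)
    (φ φ' φ'' : ℝ → ℝ)
    (hd1 : ∀ t ∈ Ioi (0:ℝ), HasDerivAt φ (φ' t) t)
    (hd2 : ∀ t ∈ Ioi (0:ℝ), HasDerivAt φ' (φ'' t) t)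
    (hode : ∀ t ∈ Ioi (0:ℝ),
      φ'' t + ((n : ℝ) - 1) * ((exp (2*t) + 1) / (exp (2*t) - 1)) * φ' t
        = lam * (φ t - |φ t| ^ (q - 1) * φ t))
    (E : ℝ → ℝ)
    (hE : ∀ t, E t = (1/2) * (φ' t)^2 + lam * (|φ t| ^ (q + 1) / (q + 1) - (φ t)^2 / 2))
    (hpos : ∀ t ∈ Ioi (0:ℝ), 0 < φ t)
    (hliminf : liminf φ atTop = 0) :
    Tendsto E atTop (nhds 0) ∧
    (∀ t₀ ∈ Ioi (0:ℝ), ¬ IsLocalMin φ t₀) ∧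
    (∃ T : ℝ, 0 < T ∧ AntitoneOn φ (Ici T)) ∧
    Tendsto φ atTop (nhds 0) := by
  have h : IsRadialYamabeSolution n lam q φ φ' φ'' := ⟨hd1, hd2, hode⟩
  obtain rfl : E = yamabeEnergy lam q φ φ' := funext hE
  have hEanti := h.antitoneOn_yamabeEnergy (by omega) (by linarith) hpos
  have hcluster : MapClusterPt 0 atTop φ := hliminf ▸ MapClusterPt.liminf
    (isBoundedUnder_le_of_antitoneOn_yamabeEnergy hlam hq hEanti).isCoboundedUnder_ge
    (isBoundedUnder_of_eventually_ge (eventually_of_mem (Ioi_mem_atTop 0) fun t ht =>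
      (hpos t ht).le))
  have hE₀ : ∀ t ∈ Ioi (0:ℝ), 0 ≤ yamabeEnergy lam q φ φ' t :=
    fun t ht => yamabeEnergy_nonneg (by linarith) hEanti hcluster ht
  have hmax : ∀ t ∈ Ioi (0:ℝ), φ' t = 0 → ∀ᶠ s in 𝓝[≠] t, φ s < φ t :=
    fun t ht => h.eventually_lt_of_deriv_eq_zero hlam hq ht (hpos t ht) (hE₀ t ht)
  obtain ⟨T, hT, hne⟩ := exists_forall_ge_deriv_ne_zero hd1 hmax
  have hT' : ∀ t ≥ T, t ∈ Ioi (0:ℝ) := fun t ht => lt_of_lt_of_le hT ht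
  have hreturn : ∀ t ≥ T, ∃ s > t, φ s < φ t := fun t ht =>
    (((hcluster.frequently (eventually_lt_nhds (hpos t (hT' t ht)))).and_eventually
      (eventually_gt_atTop t)).exists).imp fun _ hs => ⟨hs.2, hs.1⟩
  have hneg : ∀ t ≥ T, φ' t < 0 := fun t => deriv_neg_of_forall_exists_lt
    (fun t ht => hd1 t (hT' t ht))
    (fun t ht => (hd2 t (hT' t ht)).continuousAt.continuousWithinAt) hne hreturn
  have hφanti : AntitoneOn φ (Ici T) := antitoneOn_of_hasDerivWithinAt_nonpos (convex_Ici T)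
    (fun t ht => (hd1 t (hT' t ht)).continuousAt.continuousWithinAt)
    (fun t ht => (hd1 t (hT' t (interior_subset ht))).hasDerivWithinAt)
    fun t ht => (hneg t (interior_subset ht)).le
  have hφ0 : Tendsto φ atTop (𝓝 0) := tendsto_of_antitoneOn_of_frequently_lt hφanti
    (fun t ht => (hpos t (hT' t ht)).le)
    fun b hb => hcluster.frequently (eventually_lt_nhds hb)
  refine ⟨tendsto_yamabeEnergy_zero (by linarith) (fun t ht => hd1 t (hT' t ht)) hneg
    (fun t ht => (hpos t (hT' t ht)).le) hφ0 (hEanti.mono fun t ht => hT' t ht)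
    (fun t ht => hE₀ t (hT' t ht)), fun t ht hmin => not_isLocalMin_of_eventually_lt
    (hmax t ht (hmin.hasDerivAt_eq_zero (hd1 t ht))) hmin, ⟨T, hT, hφanti⟩, hφ0⟩
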